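/- arXiv:2105.00111 — 10 statements merged into one kernel-verified Lean document; each statement's English description precedes it below -/
import Mathlib

section
/- Completeness of the UMPS-to-communication-delay reduction: given a UMPS instance I with n jobs, m machines, and a feasible schedule of makespan L, the derived communication-delay instance I' (jobs j'_1,...,j'_n with the same processing times and zero-delay precedences inherited from I, plus m unit-length dummy jobs j*_i with precedence j'_l ≺ j*_i and delay C_∞ for each job l with M(l)=i) admits a feasible schedule on m machines with makespan at most L+1. -/
/-! Keep the schedule of `I` for the original jobs and put the dummy job `j*_i` on machine `i`
during `[L, L + 1)`. Every predecessor `j'_l` of `j*_i` then runs on machine `M l = i` and ends by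
time `L`, so the delay `C∞` never applies, and the dummy jobs start after everything else. -/

theorem reduction_completeness_general
    (n m : ℕ) (p : Fin n → ℕ)
    (M : Fin n → Fin m)
    (prec : Fin n → Fin n → Prop)
    (L : ℕ) (s : Fin n → ℕ)
    (hfeas_prec : ∀ u v, prec u v → s u + p u ≤ s v)
    (hfeas_mach : ∀ u v, u ≠ v → M u = M v → (s u + p u ≤ s v ∨ s v + p v ≤ s u))
    (hmakespan : ∀ l, s l + p l ≤ L) :
    ∃ (A : Fin n ⊕ Fin m → Fin m) (σ : Fin n ⊕ Fin m → ℕ),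
      -- precedences among the original jobs have communication delay 0
      (∀ u v, prec u v → σ (.inl u) + p u ≤ σ (.inl v)) ∧
      -- precedences to dummy jobs have communication delay C∞ = n * ∑ p
      (∀ l : Fin n,
        (A (.inl l) = A (.inr (M l)) → σ (.inl l) + p l ≤ σ (.inr (M l))) ∧
        (A (.inl l) ≠ A (.inr (M l)) →
          σ (.inl l) + p l + n * (∑ j, p j) ≤ σ (.inr (M l)))) ∧
      -- jobs on the same machine occupy disjoint time intervals
      (∀ j k : Fin n ⊕ Fin m, j ≠ k → A j = A k →
        (σ j + Sum.elim p (fun _ => 1) j ≤ σ k ∨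
         σ k + Sum.elim p (fun _ => 1) k ≤ σ j)) ∧
      -- makespan at most L + 1
      (∀ j : Fin n ⊕ Fin m, σ j + Sum.elim p (fun _ => 1) j ≤ L + 1) := by
  refine ⟨Sum.elim M id, Sum.elim s fun _ => L, hfeas_prec,
    fun l => ⟨fun _ => hmakespan l, fun h => absurd rfl h⟩, ?_, ?_⟩
  · rintro (u | i) (v | j) hne hA
    · exact hfeas_mach u v (Sum.inl_injective.ne_iff.mp hne) hA
    · exact .inl (hmakespan u)
    · exact .inr (hmakespan v)
    · exact absurd hA (Sum.inr_injective.ne_iff.mp hne)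
  · rintro (u | i)
    · exact (hmakespan u).trans L.le_succ
    · exact le_rfl

/-- Completeness of the UMPS-to-communication-delay reduction.
Given a UMPS instance `I` (jobs `Fin n`, processing times `p`, machine assignment `M`,
precedences `prec`) with a feasible schedule `s` of makespan at most `L`, the derived
communication-delay instance `I'` (jobs `Fin n ⊕ Fin m`: the original jobs with their
processing times and zero-delay precedences, plus `m` unit-length dummy jobs `.inr i`
with precedence `j'_l ≺ j*_i` and delay `C∞ = n * ∑ p` whenever `M l = i`) admits a
feasible schedule on `m` machines with makespan at most `L + 1`. -/
theorem reduction_completeness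
    (n m : ℕ) (p : Fin n → ℕ) (hp : ∀ l, 0 < p l)
    (M : Fin n → Fin m)
    (prec : Fin n → Fin n → Prop)
    (L : ℕ) (s : Fin n → ℕ)
    (hfeas_prec : ∀ u v, prec u v → s u + p u ≤ s v)
    (hfeas_mach : ∀ u v, u ≠ v → M u = M v → (s u + p u ≤ s v ∨ s v + p v ≤ s u))
    (hmakespan : ∀ l, s l + p l ≤ L) :
    ∃ (A : Fin n ⊕ Fin m → Fin m) (σ : Fin n ⊕ Fin m → ℕ),
      -- precedences among the original jobs have communication delay 0
      (∀ u v, prec u v → σ (.inl u) + p u ≤ σ (.inl v)) ∧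
      -- precedences to dummy jobs have communication delay C∞ = n * ∑ p
      (∀ l : Fin n,
        (A (.inl l) = A (.inr (M l)) → σ (.inl l) + p l ≤ σ (.inr (M l))) ∧
        (A (.inl l) ≠ A (.inr (M l)) →
          σ (.inl l) + p l + n * (∑ j, p j) ≤ σ (.inr (M l)))) ∧
      -- jobs on the same machine occupy disjoint time intervals
      (∀ j k : Fin n ⊕ Fin m, j ≠ k → A j = A k →
        (σ j + Sum.elim p (fun _ => 1) j ≤ σ k ∨
         σ k + Sum.elim p (fun _ => 1) k ≤ σ j)) ∧
      -- makespan at most L + 1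
      (∀ j : Fin n ⊕ Fin m, σ j + Sum.elim p (fun _ => 1) j ≤ L + 1) :=
  reduction_completeness_general n m p M prec L s hfeas_prec hfeas_mach hmakespan
end

section
/- Soundness of the UMPS-to-communication-delay reduction: if the derived communication-delay instance I' (as in the reduction, with C_∞ = n·∑_l p(l)) has a feasible schedule with makespan L ≤ ∑_{l=1}^n p(l), then for every machine index i ∈ [m] of the original UMPS instance, all jobs j'_l with M(l)=i are scheduled on the same machine of I' as the dummy job j*_i. -/
theorem eq_machine_of_delay_ge_deadline {α : Type*} (A σ : α → ℕ) {j k : α} {c L : ℕ}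
    (hdelay : A j ≠ A k → c ≤ σ k) (hk : σ k < L) (hc : L ≤ c) : A j = A k := by
  by_contra hne
  have := hdelay hne
  omega

theorem reduction_soundness_same_machine_general
    (n m : ℕ) (p : Fin n → ℕ)
    (M : Fin n → Fin m)
    (L : ℕ) (hL : L ≤ ∑ j, p j)
    (A : Fin n ⊕ Fin m → ℕ) (σ : Fin n ⊕ Fin m → ℕ)
    -- dummy-job precedences with communication delay C∞ = n * ∑ p
    (hdummy : ∀ l : Fin n,
      (A (.inl l) = A (.inr (M l)) → σ (.inl l) + p l ≤ σ (.inr (M l))) ∧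
      (A (.inl l) ≠ A (.inr (M l)) →
        σ (.inl l) + p l + n * (∑ j, p j) ≤ σ (.inr (M l))))
    -- makespan at most L
    (hmakespan : ∀ j : Fin n ⊕ Fin m, σ j + Sum.elim p (fun _ => 1) j ≤ L) :
    ∀ l : Fin n, A (.inl l) = A (.inr (M l)) := by
  intro l
  have hC : L ≤ n * ∑ j, p j := hL.trans (Nat.le_mul_of_pos_left _ l.pos)
  have hdummy_start : σ (.inr (M l)) < L := hmakespan (.inr (M l))
  refine eq_machine_of_delay_ge_deadline A σ (fun hne => ?_) hdummy_start hC
  have := (hdummy l).2 hne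
  omega

/-- Soundness of the UMPS-to-communication-delay reduction (key fact).
If the derived communication-delay instance `I'` (jobs `Fin n ⊕ Fin m`, original jobs
with processing times `p` and zero-delay precedences, dummy unit jobs `.inr i` with
precedence from every `j'_l` with `M l = i` and delay `C∞ = n * ∑ p`) has a feasible
schedule (machine assignment `A`, start times `σ`) with makespan `L ≤ ∑ p`, then for
every machine index `i` every job `j'_l` with `M l = i` is scheduled on the same
machine of `I'` as the dummy job `j*_i`. -/
theorem reduction_soundness_same_machine
    (n m : ℕ) (p : Fin n → ℕ) (hp : ∀ l, 0 < p l)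
    (M : Fin n → Fin m)
    (prec : Fin n → Fin n → Prop)
    (L : ℕ) (hL : L ≤ ∑ j, p j)
    (A : Fin n ⊕ Fin m → ℕ) (σ : Fin n ⊕ Fin m → ℕ)
    -- zero-delay precedences among original jobs
    (hprec0 : ∀ u v, prec u v → σ (.inl u) + p u ≤ σ (.inl v))
    -- dummy-job precedences with communication delay C∞ = n * ∑ p
    (hdummy : ∀ l : Fin n,
      (A (.inl l) = A (.inr (M l)) → σ (.inl l) + p l ≤ σ (.inr (M l))) ∧
      (A (.inl l) ≠ A (.inr (M l)) →
        σ (.inl l) + p l + n * (∑ j, p j) ≤ σ (.inr (M l))))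
    -- jobs on the same machine occupy disjoint intervals
    (hmach : ∀ j k : Fin n ⊕ Fin m, j ≠ k → A j = A k →
      (σ j + Sum.elim p (fun _ => 1) j ≤ σ k ∨
       σ k + Sum.elim p (fun _ => 1) k ≤ σ j))
    -- makespan at most L
    (hmakespan : ∀ j : Fin n ⊕ Fin m, σ j + Sum.elim p (fun _ => 1) j ≤ L) :
    ∀ l : Fin n, A (.inl l) = A (.inr (M l)) :=
  reduction_soundness_same_machine_general n m p M L hL A σ hdummy hmakespan
end

section
/- Soundness of the UMPS-to-communication-delay reduction (schedule extraction): if the communication-delay instance I' derived from a UMPS instance I admits a feasible schedule with makespan L ≤ ∑_{l=1}^n p(l), then I admits a feasible UMPS schedule with makespan at most L. -/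
/-! A dummy successor with communication delay `n * ∑ p ≥ L` cannot be scheduled on another machine
within makespan `L`, so every job `l` of `I'` runs on the machine of the dummy job of `M l`. Hence jobs
sharing a machine in `I` share one in `I'`, and the start times of `I'` are already a UMPS schedule. -/

theorem eq_of_delay_ge_makespan {ι : Type*} {A σ len : ι → ℕ} {C L : ℕ} (hC : L ≤ C)
    (hmakespan : ∀ j, σ j + len j ≤ L) {u v : ι} (hv : 0 < len v)
    (hdelay : A u ≠ A v → σ u + len u + C ≤ σ v) : A u = A v := by
  by_contra hne
  have := hdelay hne
  have := hmakespan v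
  omega

theorem reduction_soundness_extraction_general
    (n m : ℕ) (p : Fin n → ℕ)
    (M : Fin n → Fin m)
    (prec : Fin n → Fin n → Prop)
    (L : ℕ) (hL : L ≤ ∑ j, p j)
    (A : Fin n ⊕ Fin m → ℕ) (σ : Fin n ⊕ Fin m → ℕ)
    -- zero-delay precedences among original jobs
    (hprec0 : ∀ u v, prec u v → σ (.inl u) + p u ≤ σ (.inl v))
    -- dummy-job precedences with communication delay C∞ = n * ∑ p
    (hdummy : ∀ l : Fin n,
      (A (.inl l) = A (.inr (M l)) → σ (.inl l) + p l ≤ σ (.inr (M l))) ∧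
      (A (.inl l) ≠ A (.inr (M l)) →
        σ (.inl l) + p l + n * (∑ j, p j) ≤ σ (.inr (M l))))
    -- jobs on the same machine occupy disjoint intervals
    (hmach : ∀ j k : Fin n ⊕ Fin m, j ≠ k → A j = A k →
      (σ j + Sum.elim p (fun _ => 1) j ≤ σ k ∨
       σ k + Sum.elim p (fun _ => 1) k ≤ σ j))
    -- makespan at most L
    (hmakespan : ∀ j : Fin n ⊕ Fin m, σ j + Sum.elim p (fun _ => 1) j ≤ L) :
    ∃ s : Fin n → ℕ,
      (∀ u v, prec u v → s u + p u ≤ s v) ∧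
      (∀ u v, u ≠ v → M u = M v → (s u + p u ≤ s v ∨ s v + p v ≤ s u)) ∧
      (∀ l, s l + p l ≤ L) := by
  have hsame (l : Fin n) : A (.inl l) = A (.inr (M l)) :=
    eq_of_delay_ge_makespan (hL.trans (Nat.le_mul_of_pos_left _ l.pos)) hmakespan
      Nat.one_pos (hdummy l).2
  refine ⟨fun l => σ (.inl l), hprec0, fun u v huv hM => ?_, fun l => hmakespan (.inl l)⟩
  exact hmach (.inl u) (.inl v) (Sum.inl_injective.ne huv) (by rw [hsame u, hsame v, hM])

/-- Soundness of the UMPS-to-communication-delay reduction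
(schedule extraction). If the derived communication-delay instance `I'` admits a
feasible schedule (machine assignment `A`, start times `σ`) with makespan
`L ≤ ∑ p`, then the original UMPS instance `I` admits a feasible schedule with
makespan at most `L`. -/
theorem reduction_soundness_extraction
    (n m : ℕ) (p : Fin n → ℕ) (hp : ∀ l, 0 < p l)
    (M : Fin n → Fin m)
    (prec : Fin n → Fin n → Prop)
    (L : ℕ) (hL : L ≤ ∑ j, p j)
    (A : Fin n ⊕ Fin m → ℕ) (σ : Fin n ⊕ Fin m → ℕ)
    -- zero-delay precedences among original jobs
    (hprec0 : ∀ u v, prec u v → σ (.inl u) + p u ≤ σ (.inl v))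
    -- dummy-job precedences with communication delay C∞ = n * ∑ p
    (hdummy : ∀ l : Fin n,
      (A (.inl l) = A (.inr (M l)) → σ (.inl l) + p l ≤ σ (.inr (M l))) ∧
      (A (.inl l) ≠ A (.inr (M l)) →
        σ (.inl l) + p l + n * (∑ j, p j) ≤ σ (.inr (M l))))
    -- jobs on the same machine occupy disjoint intervals
    (hmach : ∀ j k : Fin n ⊕ Fin m, j ≠ k → A j = A k →
      (σ j + Sum.elim p (fun _ => 1) j ≤ σ k ∨
       σ k + Sum.elim p (fun _ => 1) k ≤ σ j))
    -- makespan at most L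
    (hmakespan : ∀ j : Fin n ⊕ Fin m, σ j + Sum.elim p (fun _ => 1) j ≤ L) :
    ∃ s : Fin n → ℕ,
      (∀ u v, prec u v → s u + p u ≤ s v) ∧
      (∀ u v, u ≠ v → M u = M v → (s u + p u ≤ s v ∨ s v + p v ≤ s u)) ∧
      (∀ l, s l + p l ≤ L) :=
  reduction_soundness_extraction_general n m p M prec L hL A σ hprec0 hdummy hmach hmakespan
end

section
/- In the UMPS-to-related-machines reduction with κ = 10n³m, for every l ∈ [n] with i = M(l), the total number of jobs of 𝒥_l that can be processed within time n by all machines in ⋃_{j>i} ℳ_j is at most (nm/κ)·κ^{2(m−i)} ≤ κ^{2(m−i)}/(10n²). Consequently, in any schedule of makespan at most n, at most a γ = 1/(10n²) fraction of the jobs in 𝒥_l are processed on machines outside ℳ_i. -/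
/-!
A machine of speed `κ^(j-1)` from `ℳ_j` fits at most `n κ^(j-1) / κ^(i-1)` jobs of length
`κ^(i-1)` into time `n`, and `ℳ_j` has `κ^(2(m-j))` machines. For `j > i` the total capacity
of `ℳ_j` is therefore at most `n κ^(2m-j-i) ≤ (n/κ) κ^(2(m-i))`: the number of machines shrinks
by `κ²` per class while their speed grows only by `κ`. Summing over the fewer than `m` classes
above `i` gives `(nm/κ) κ^(2(m-i))`, and `nm/κ = 1/(10n²)` for `κ = 10n³m`.
-/

open Finset

variable {α : Type*} [Field α] [LinearOrder α] [IsStrictOrderedRing α]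

lemma pow_mul_pow_div_pow_le_pow_div {κ : α} (hκ : 1 ≤ κ) {i j m : ℕ}
    (hij : i + 1 ≤ j) (hjm : j ≤ m) :
    κ ^ (2 * (m - j)) * κ ^ (j - 1) / κ ^ (i - 1) ≤ κ ^ (2 * (m - i)) / κ := by
  have hκ0 : 0 < κ := zero_lt_one.trans_le hκ
  rw [div_le_div_iff₀ (pow_pos hκ0 _) hκ0, ← pow_add, ← pow_succ, ← pow_add]
  exact pow_le_pow_right₀ hκ (by omega)

lemma sum_Icc_capacity_le {n κ : α} (hn : 0 ≤ n) (hκ : 1 ≤ κ) (i m : ℕ) :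
    ∑ j ∈ Icc (i + 1) m, n * κ ^ (2 * (m - j)) * κ ^ (j - 1) / κ ^ (i - 1)
      ≤ n * m / κ * κ ^ (2 * (m - i)) := by
  calc ∑ j ∈ Icc (i + 1) m, n * κ ^ (2 * (m - j)) * κ ^ (j - 1) / κ ^ (i - 1)
      ≤ ∑ _j ∈ Icc (i + 1) m, n * (κ ^ (2 * (m - i)) / κ) := by
        refine sum_le_sum fun j hj => ?_
        rw [mem_Icc] at hj
        rw [mul_assoc, mul_div_assoc]
        exact mul_le_mul_of_nonneg_left (pow_mul_pow_div_pow_le_pow_div hκ hj.1 hj.2) hn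
    _ = ((m - i : ℕ) : α) * (n * (κ ^ (2 * (m - i)) / κ)) := by
        rw [sum_const, Nat.card_Icc, nsmul_eq_mul, Nat.add_sub_add_right]
    _ ≤ (m : α) * (n * (κ ^ (2 * (m - i)) / κ)) := by
        gcongr
        exact Nat.sub_le m i
    _ = n * m / κ * κ ^ (2 * (m - i)) := by ring

theorem related_machines_fast_machines_bound_general
    (n m : ℕ) (hn : 1 ≤ n) (hm : 1 ≤ m)
    (i : ℕ)
    (κ : ℕ) (hκ : κ = 10 * n ^ 3 * m) :
    (∑ j ∈ Finset.Icc (i + 1) m,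
        (n : ℝ) * (κ : ℝ) ^ (2 * (m - j)) * (κ : ℝ) ^ (j - 1) / (κ : ℝ) ^ (i - 1))
      ≤ ((n : ℝ) * m / κ) * (κ : ℝ) ^ (2 * (m - i)) ∧
    ((n : ℝ) * m / κ) * (κ : ℝ) ^ (2 * (m - i))
      ≤ (1 / (10 * (n : ℝ) ^ 2)) * (κ : ℝ) ^ (2 * (m - i)) := by
  have hκ_one : (1 : ℝ) ≤ κ := by
    subst hκ
    exact_mod_cast Nat.one_le_iff_ne_zero.mpr (by positivity)
  have hγ : (n : ℝ) * m / κ = 1 / (10 * (n : ℝ) ^ 2) := by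
    have hn0 : (n : ℝ) ≠ 0 := by positivity
    have hm0 : (m : ℝ) ≠ 0 := by positivity
    subst hκ
    push_cast
    field_simp
  exact ⟨sum_Icc_capacity_le (Nat.cast_nonneg n) hκ_one i m, by rw [hγ]⟩

/-- In the UMPS-to-related-machines reduction with `κ = 10n³m`, for a
job group `𝒥_l` with `i = M(l)`, the total number of jobs of `𝒥_l` (each of
processing requirement `κ^(i-1)`) that all machines in `⋃_{j>i} ℳ_j` (where `ℳ_j`
has `κ^(2(m-j))` machines of speed `κ^(j-1)`) can process within time `n` is at most
`(nm/κ)·κ^(2(m-i)) ≤ κ^(2(m-i))/(10n²)`; i.e. at most a `γ = 1/(10n²)` fraction of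
the `κ^(2(m-i))` jobs of `𝒥_l` can be processed on machines outside `ℳ_i`
in any schedule of makespan at most `n`. -/
theorem related_machines_fast_machines_bound
    (n m : ℕ) (hn : 1 ≤ n) (hm : 1 ≤ m)
    (i : ℕ) (hi : 1 ≤ i) (him : i ≤ m)
    (κ : ℕ) (hκ : κ = 10 * n ^ 3 * m) :
    (∑ j ∈ Finset.Icc (i + 1) m,
        (n : ℝ) * (κ : ℝ) ^ (2 * (m - j)) * (κ : ℝ) ^ (j - 1) / (κ : ℝ) ^ (i - 1))
      ≤ ((n : ℝ) * m / κ) * (κ : ℝ) ^ (2 * (m - i)) ∧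
    ((n : ℝ) * m / κ) * (κ : ℝ) ^ (2 * (m - i))
      ≤ (1 / (10 * (n : ℝ) ^ 2)) * (κ : ℝ) ^ (2 * (m - i)) :=
  related_machines_fast_machines_bound_general n m hn hm i κ hκ
end

section
/- Under the hypotheses of the previous statement with γ·L ≤ 1/(10n) and n ≥ 1, every machine fractionally processes at most 2 distinct jobs with positive amount in any single time slot: for every i ∈ [m] and t ∈ [L], |{l ∈ J(i) : x_{l,t} > 0}| ≤ 2. -/
/-!
On each machine, the jobs that are still unfinished after slot `s` have together received at most
`s γ` work by then. Indeed, a slot in which an unfinished job is served is full (greedy filling),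
so it also serves a second job, and by greedy priority that job finishes in this slot; having
needed at least `1 - γ` in total, it had done all but its share of the slot before, which
bounds what the unfinished job receives by the other job's earlier work plus `γ`.

If three jobs were served in slot `t`, priority forces two of them to finish there. Both were
unfinished after slot `t - 1`, so together they had done at most `(t - 1) γ` and need at least
`2 - (t + 1) γ > 1` in slot `t`, more than the capacity the third job leaves them.
-/

open Finset

def processed (x : ℕ → ℕ → ℝ) (l s : ℕ) : ℝ :=
  ∑ t ∈ Icc 1 s, x l t

noncomputable def pending (n L : ℕ) (x : ℕ → ℕ → ℝ) (M : ℕ → ℕ) (i s : ℕ) : Finset ℕ :=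
  (range n).filter fun l => M l = i ∧ processed x l s < processed x l L

theorem processed_succ (x : ℕ → ℕ → ℝ) (l k : ℕ) :
    processed x l (k + 1) = processed x l k + x l (k + 1) :=
  sum_Icc_succ_top (by omega) _

/-- `x l t` is the work on job `l` in slot `t`, `M l` its machine and `[ts l, te l]` its window;
jobs are prioritised by deadline `te`, ties broken by index. -/
structure GreedyFractionalSchedule (n L : ℕ) (γ : ℝ) (x : ℕ → ℕ → ℝ) (M ts te : ℕ → ℕ) :
    Prop where
  nonneg : ∀ l t, 0 ≤ x l t
  supp : ∀ l t, 0 < x l t → l < n ∧ 1 ≤ t ∧ t ≤ L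
  ts_le : ∀ l t, 0 < x l t → ts l ≤ t
  le_te : ∀ l t, 0 < x l t → t ≤ te l
  one_sub_le_total : ∀ l, l < n → 1 - γ ≤ processed x l L
  total_le_one : ∀ l, l < n → processed x l L ≤ 1
  capacity : ∀ i t, ∑ l ∈ (range n).filter (fun l => M l = i), x l t ≤ 1
  finished_of_priority : ∀ i t l₁ l₂,
    l₁ < n → l₂ < n → M l₁ = i → M l₂ = i →
    ts l₁ ≤ t → t ≤ te l₁ → ts l₂ ≤ t → t ≤ te l₂ →
    (te l₁ < te l₂ ∨ (te l₁ = te l₂ ∧ l₁ < l₂)) →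
    0 < x l₂ t → processed x l₁ t = processed x l₁ L
  finished_of_underfull : ∀ i t, 1 ≤ t → t ≤ L →
    (∑ l ∈ (range n).filter (fun l => M l = i ∧ ts l ≤ t ∧ t ≤ te l), x l t) < 1 →
    ∀ l, l < n → M l = i → ts l ≤ t → t ≤ te l → processed x l t = processed x l L

namespace GreedyFractionalSchedule

variable {n L : ℕ} {γ : ℝ} {x : ℕ → ℕ → ℝ} {M ts te : ℕ → ℕ}

theorem processed_nonneg (hS : GreedyFractionalSchedule n L γ x M ts te) (l s : ℕ) :
    0 ≤ processed x l s :=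
  sum_nonneg fun t _ => hS.nonneg l t

theorem pending_succ_subset (hS : GreedyFractionalSchedule n L γ x M ts te) (i k : ℕ) :
    pending n L x M i (k + 1) ⊆ pending n L x M i k := by
  intro l hl
  simp only [pending, mem_filter] at hl ⊢
  exact ⟨hl.1, hl.2.1, by linarith [hl.2.2, processed_succ x l k, hS.nonneg l (k + 1)]⟩

theorem mem_pending_of_finished (hS : GreedyFractionalSchedule n L γ x M ts te) {i l k : ℕ}
    (hM : M l = i) (hpos : 0 < x l (k + 1))
    (hfin : processed x l (k + 1) = processed x l L) : l ∈ pending n L x M i k := by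
  simp only [pending, mem_filter, mem_range]
  exact ⟨(hS.supp l _ hpos).1, hM, by linarith [processed_succ x l k]⟩

theorem finished_or_finished (hS : GreedyFractionalSchedule n L γ x M ts te) {i t l₁ l₂ : ℕ}
    (hM₁ : M l₁ = i) (hM₂ : M l₂ = i) (hne : l₁ ≠ l₂) (h₁ : 0 < x l₁ t) (h₂ : 0 < x l₂ t) :
    processed x l₁ t = processed x l₁ L ∨ processed x l₂ t = processed x l₂ L := by
  have first_finishes : ∀ a b, M a = i → M b = i → 0 < x a t → 0 < x b t →
      (te a < te b ∨ (te a = te b ∧ a < b)) → processed x a t = processed x a L :=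
    fun a b ha hb hxa hxb hab =>
      hS.finished_of_priority i t a b (hS.supp a t hxa).1 (hS.supp b t hxb).1 ha hb
        (hS.ts_le a t hxa) (hS.le_te a t hxa) (hS.ts_le b t hxb) (hS.le_te b t hxb) hab hxb
  by_cases h : te l₁ < te l₂ ∨ (te l₁ = te l₂ ∧ l₁ < l₂)
  · exact .inl (first_finishes l₁ l₂ hM₁ hM₂ h₁ h₂ h)
  · exact .inr (first_finishes l₂ l₁ hM₂ hM₁ h₂ h₁ (by omega))

theorem sum_le_one (hS : GreedyFractionalSchedule n L γ x M ts te) {i t : ℕ} {s : Finset ℕ}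
    (hs : ∀ l ∈ s, M l = i ∧ 0 < x l t) : ∑ l ∈ s, x l t ≤ 1 := by
  refine le_trans (sum_le_sum_of_subset_of_nonneg ?_ fun l _ _ => hS.nonneg l t) (hS.capacity i t)
  intro l hl
  simpa using ⟨(hS.supp l t (hs l hl).2).1, (hs l hl).1⟩

/-- Otherwise the slot would not be full, and greedy filling would finish the job in it. -/
theorem exists_ne_pos_of_pending (hS : GreedyFractionalSchedule n L γ x M ts te) {i t l : ℕ}
    (hM : M l = i) (hpos : 0 < x l t) (hpend : processed x l t < processed x l L) :
    ∃ l' ≠ l, M l' = i ∧ 0 < x l' t := by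
  by_contra! h
  obtain ⟨hln, ht1, htL⟩ := hS.supp l t hpos
  refine hpend.ne (hS.finished_of_underfull i t ht1 htL ?_ l hln hM
    (hS.ts_le l t hpos) (hS.le_te l t hpos))
  rw [sum_eq_single_of_mem l (by simp [hln, hM, hS.ts_le l t hpos, hS.le_te l t hpos])
    fun b hb hbl => le_antisymm (h b hbl (mem_filter.1 hb).2.1) (hS.nonneg b t)]
  calc x l t ≤ processed x l t := single_le_sum (f := x l) (fun _ _ => hS.nonneg l _) (mem_Icc.2 ⟨ht1, le_rfl⟩)
    _ < processed x l L := hpend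
    _ ≤ 1 := hS.total_le_one l hln

theorem sum_pending_le (hS : GreedyFractionalSchedule n L γ x M ts te) (hγ : 0 ≤ γ) (i k : ℕ) :
    ∑ l ∈ pending n L x M i (k + 1), x l (k + 1) ≤
      ∑ l ∈ pending n L x M i k \ pending n L x M i (k + 1), processed x l k + γ := by
  by_cases h : ∃ l₀ ∈ pending n L x M i (k + 1), 0 < x l₀ (k + 1)
  · obtain ⟨l₀, hl₀, hpos₀⟩ := h
    obtain ⟨-, hM₀, hpend₀⟩ := mem_filter.1 hl₀
    have other_finishes : ∀ l ≠ l₀, M l = i → 0 < x l (k + 1) →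
        processed x l (k + 1) = processed x l L := fun l hne hM hpos =>
      (hS.finished_or_finished hM hM₀ hne hpos hpos₀).resolve_right hpend₀.ne
    obtain ⟨a, hne, hMa, hposa⟩ := hS.exists_ne_pos_of_pending hM₀ hpos₀ hpend₀
    have hfina := other_finishes a hne hMa hposa
    have ha : a ∈ pending n L x M i k \ pending n L x M i (k + 1) :=
      mem_sdiff.2 ⟨hS.mem_pending_of_finished hMa hposa hfina,
        fun h => (mem_filter.1 h).2.2.ne hfina⟩
    have hsingle : ∑ l ∈ pending n L x M i (k + 1), x l (k + 1) = x l₀ (k + 1) := by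
      refine sum_eq_single_of_mem l₀ hl₀ fun l hl hne => ?_
      obtain ⟨-, hM, hpend⟩ := mem_filter.1 hl
      refine le_antisymm (not_lt.1 fun hpos => hpend.ne ?_) (hS.nonneg l _)
      exact other_finishes l hne hM hpos
    have hpair : x l₀ (k + 1) + x a (k + 1) ≤ 1 := by
      simpa [sum_pair hne.symm] using
        hS.sum_le_one (i := i) (t := k + 1) (s := {l₀, a}) (by simp [hM₀, hMa, hpos₀, hposa])
    have hprev : 1 - γ - x a (k + 1) ≤ processed x a k := by
      linarith [processed_succ x a k, hS.one_sub_le_total a (hS.supp a _ hposa).1]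
    have hle := single_le_sum (fun l _ => hS.processed_nonneg l k) ha
    linarith
  · push Not at h
    rw [sum_eq_zero fun l hl => le_antisymm (h l hl) (hS.nonneg l _)]
    linarith [sum_nonneg fun l (_ : l ∈ pending n L x M i k \ pending n L x M i (k + 1)) =>
      hS.processed_nonneg l k]

theorem sum_processed_pending_le (hS : GreedyFractionalSchedule n L γ x M ts te) (hγ : 0 ≤ γ)
    (i s : ℕ) : ∑ l ∈ pending n L x M i s, processed x l s ≤ s * γ := by
  induction s with
  | zero => simp [processed]
  | succ k ih =>
    calc ∑ l ∈ pending n L x M i (k + 1), processed x l (k + 1)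
        = ∑ l ∈ pending n L x M i (k + 1), processed x l k +
            ∑ l ∈ pending n L x M i (k + 1), x l (k + 1) := by
          simp only [processed_succ, sum_add_distrib]
      _ ≤ ∑ l ∈ pending n L x M i (k + 1), processed x l k +
            (∑ l ∈ pending n L x M i k \ pending n L x M i (k + 1), processed x l k + γ) := by
          gcongr
          exact hS.sum_pending_le hγ i k
      _ = ∑ l ∈ pending n L x M i k, processed x l k + γ := by
          rw [← sum_sdiff (hS.pending_succ_subset i k)]
          ring
      _ ≤ (k + 1 : ℕ) * γ := by
          push_cast
          linarith

theorem one_lt_of_two_finished (hS : GreedyFractionalSchedule n L γ x M ts te) (hγ : 0 ≤ γ)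
    {i k p q r : ℕ} (hMp : M p = i) (hMq : M q = i) (hMr : M r = i)
    (hpq : p ≠ q) (hpr : p ≠ r) (hqr : q ≠ r)
    (hp : 0 < x p (k + 1)) (hq : 0 < x q (k + 1)) (hr : 0 < x r (k + 1))
    (hfinp : processed x p (k + 1) = processed x p L)
    (hfinq : processed x q (k + 1) = processed x q L) :
    1 < ((k : ℝ) + 2) * γ := by
  have hearlier : processed x p k + processed x q k ≤ k * γ :=
    calc processed x p k + processed x q k = ∑ l ∈ {p, q}, processed x l k :=
          (sum_pair (f := fun l => processed x l k) hpq).symm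
      _ ≤ ∑ l ∈ pending n L x M i k, processed x l k := by
          refine sum_le_sum_of_subset_of_nonneg ?_ fun l _ _ => hS.processed_nonneg l k
          simp [insert_subset_iff, hS.mem_pending_of_finished hMp hp hfinp,
            hS.mem_pending_of_finished hMq hq hfinq]
      _ ≤ k * γ := hS.sum_processed_pending_le hγ i k
  have hslot : x p (k + 1) + x q (k + 1) + x r (k + 1) ≤ 1 := by
    have := hS.sum_le_one (i := i) (t := k + 1) (s := {p, q, r}) (by simp [hMp, hMq, hMr, hp, hq, hr])
    rwa [sum_insert (by simp [hpq, hpr]), sum_pair hqr, ← add_assoc] at this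
  linarith [processed_succ x p k, processed_succ x q k,
    hS.one_sub_le_total p (hS.supp p _ hp).1, hS.one_sub_le_total q (hS.supp q _ hq).1]

theorem one_lt_of_three_pos (hS : GreedyFractionalSchedule n L γ x M ts te) (hγ : 0 ≤ γ)
    {i k a b c : ℕ} (hMa : M a = i) (hMb : M b = i) (hMc : M c = i)
    (hab : a ≠ b) (hac : a ≠ c) (hbc : b ≠ c)
    (ha : 0 < x a (k + 1)) (hb : 0 < x b (k + 1)) (hc : 0 < x c (k + 1)) :
    1 < ((k : ℝ) + 2) * γ := by
  rcases hS.finished_or_finished hMa hMb hab ha hb with hfina | hfinb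
  · rcases hS.finished_or_finished hMb hMc hbc hb hc with hfinb | hfinc
    · exact hS.one_lt_of_two_finished hγ hMa hMb hMc hab hac hbc ha hb hc hfina hfinb
    · exact hS.one_lt_of_two_finished hγ hMa hMc hMb hac hab hbc.symm ha hc hb hfina hfinc
  · rcases hS.finished_or_finished hMa hMc hac ha hc with hfina | hfinc
    · exact hS.one_lt_of_two_finished hγ hMb hMa hMc hab.symm hbc hac hb ha hc hfinb hfina
    · exact hS.one_lt_of_two_finished hγ hMb hMc hMa hbc hab.symm hac.symm hb hc ha hfinb hfinc

end GreedyFractionalSchedule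

theorem fractional_greedy_two_jobs_per_slot_general
    (n L : ℕ) (γ : ℝ) (hγ : 0 ≤ γ)
    (hγL : γ * L ≤ 1 / (10 * n))
    (x : ℕ → ℕ → ℝ) (M : ℕ → ℕ) (ts te : ℕ → ℕ)
    (hnonneg : ∀ l t, 0 ≤ x l t)
    (hsupp : ∀ l t, 0 < x l t → l < n ∧ 1 ≤ t ∧ t ≤ L)
    (hts : ∀ l t, 0 < x l t → ts l ≤ t)
    (hte : ∀ l t, 0 < x l t → t ≤ te l)
    (htot_lb : ∀ l, l < n → 1 - γ ≤ ∑ t ∈ Finset.Icc 1 L, x l t)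
    (htot_ub : ∀ l, l < n → ∑ t ∈ Finset.Icc 1 L, x l t ≤ 1)
    (hcap : ∀ i t, ∑ l ∈ (Finset.range n).filter (fun l => M l = i), x l t ≤ 1)
    (hgreedy1 : ∀ i t l₁ l₂,
      l₁ < n → l₂ < n → M l₁ = i → M l₂ = i →
      ts l₁ ≤ t → t ≤ te l₁ → ts l₂ ≤ t → t ≤ te l₂ →
      (te l₁ < te l₂ ∨ (te l₁ = te l₂ ∧ l₁ < l₂)) →
      0 < x l₂ t →
      ∑ t' ∈ Finset.Icc 1 t, x l₁ t' = ∑ t' ∈ Finset.Icc 1 L, x l₁ t')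
    (hgreedy2 : ∀ i t, 1 ≤ t → t ≤ L →
      (∑ l ∈ (Finset.range n).filter (fun l => M l = i ∧ ts l ≤ t ∧ t ≤ te l), x l t) < 1 →
      ∀ l, l < n → M l = i → ts l ≤ t → t ≤ te l →
        ∑ t' ∈ Finset.Icc 1 t, x l t' = ∑ t' ∈ Finset.Icc 1 L, x l t') :
    ∀ i t, 1 ≤ t → t ≤ L →
      ((Finset.range n).filter (fun l => M l = i ∧ 0 < x l t)).card ≤ 2 := by
  have hS : GreedyFractionalSchedule n L γ x M ts te :=
    ⟨hnonneg, hsupp, hts, hte, htot_lb, htot_ub, hcap, hgreedy1, hgreedy2⟩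
  intro i t ht1 htL
  obtain ⟨k, rfl⟩ : ∃ k, t = k + 1 := ⟨t - 1, by omega⟩
  by_contra! hcard
  obtain ⟨a, ha, b, hb, c, hc, hab, hac, hbc⟩ := two_lt_card.1 hcard
  simp only [mem_filter, mem_range] at ha hb hc
  have hlarge := hS.one_lt_of_three_pos hγ ha.2.1 hb.2.1 hc.2.1 hab hac hbc ha.2.2 hb.2.2 hc.2.2
  have hn : (1 : ℝ) ≤ n := by exact_mod_cast (show 1 ≤ n by omega)
  have hγL' : γ * L ≤ 1 / 10 :=
    hγL.trans (one_div_le_one_div_of_le (by norm_num) (by linarith))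
  have hk : (k : ℝ) + 2 ≤ 2 * L := by exact_mod_cast (show k + 2 ≤ 2 * L by omega)
  nlinarith [mul_le_mul_of_nonneg_right hk hγ]

/-- Under the hypotheses of the greedy fractional schedule (as in the
previous statement) together with `γ·L ≤ 1/(10n)` and `n ≥ 1`, every machine
fractionally processes at most 2 distinct jobs with positive amount in any single
time slot. -/
theorem fractional_greedy_two_jobs_per_slot
    (n L : ℕ) (hn : 1 ≤ n) (γ : ℝ) (hγ : 0 ≤ γ)
    (hγL : γ * L ≤ 1 / (10 * n))
    (x : ℕ → ℕ → ℝ) (M : ℕ → ℕ) (ts te : ℕ → ℕ)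
    (hnonneg : ∀ l t, 0 ≤ x l t)
    (hsupp : ∀ l t, 0 < x l t → l < n ∧ 1 ≤ t ∧ t ≤ L)
    (hts : ∀ l t, 0 < x l t → ts l ≤ t)
    (hte : ∀ l t, 0 < x l t → t ≤ te l)
    (htot_lb : ∀ l, l < n → 1 - γ ≤ ∑ t ∈ Finset.Icc 1 L, x l t)
    (htot_ub : ∀ l, l < n → ∑ t ∈ Finset.Icc 1 L, x l t ≤ 1)
    (hcap : ∀ i t, ∑ l ∈ (Finset.range n).filter (fun l => M l = i), x l t ≤ 1)
    (prec : ℕ → ℕ → Prop)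
    (hprec : ∀ l₁ l₂ t t', prec l₁ l₂ → 0 < x l₁ t → t' ≤ t → x l₂ t' = 0)
    (hgreedy1 : ∀ i t l₁ l₂,
      l₁ < n → l₂ < n → M l₁ = i → M l₂ = i →
      ts l₁ ≤ t → t ≤ te l₁ → ts l₂ ≤ t → t ≤ te l₂ →
      (te l₁ < te l₂ ∨ (te l₁ = te l₂ ∧ l₁ < l₂)) →
      0 < x l₂ t →
      ∑ t' ∈ Finset.Icc 1 t, x l₁ t' = ∑ t' ∈ Finset.Icc 1 L, x l₁ t')
    (hgreedy2 : ∀ i t, 1 ≤ t → t ≤ L →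
      (∑ l ∈ (Finset.range n).filter (fun l => M l = i ∧ ts l ≤ t ∧ t ≤ te l), x l t) < 1 →
      ∀ l, l < n → M l = i → ts l ≤ t → t ≤ te l →
        ∑ t' ∈ Finset.Icc 1 t, x l t' = ∑ t' ∈ Finset.Icc 1 L, x l t') :
    ∀ i t, 1 ≤ t → t ≤ L →
      ((Finset.range n).filter (fun l => M l = i ∧ 0 < x l t)).card ≤ 2 :=
  fractional_greedy_two_jobs_per_slot_general n L γ hγ hγL x M ts te hnonneg hsupp hts hte htot_lb
    htot_ub hcap hgreedy1 hgreedy2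
end

section
/- If a fractional UMPS schedule x_{l,t} over L time slots processes at most 2 jobs per machine per slot, respects precedences (x_{l₁,t} > 0 and j_{l₁} ≺ j_{l₂} imply x_{l₂,t'} = 0 for t' ≤ t), and every job receives positive total processing, then there is a feasible integral UMPS schedule of the n unit-length jobs with makespan at most 2L: schedule the (at most 2) jobs with positive x in slot t of machine i integrally in slots 2t−1 and 2t. -/
/-!
Pick for every job `l` a slot `τ l` in which it is processed fractionally. The jobs that share
a machine and a chosen slot are among the at most two jobs processed there, so they can be
told apart by their rank `0` or `1` within that group; job `l` goes to integral slot
`2 τ l - 1 + rank`. Distinct groups on one machine occupy disjoint pairs `{2t - 1, 2t}`, and a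
precedence `l₁ ≺ l₂` forces `τ l₁ < τ l₂`, hence `σ l₁ ≤ 2 τ l₁ < 2 τ l₂ - 1 ≤ σ l₂`.
-/

open Finset

namespace Finset

variable {ι α : Type*} [LinearOrder ι] [DecidableEq α]

def fiberRank (s : Finset ι) (key : ι → α) (i : ι) : ℕ :=
  #{j ∈ s | key j = key i ∧ j < i}

variable {s : Finset ι} {key : ι → α} {i j : ι}

theorem fiberRank_lt_card_fiber (hi : i ∈ s) :
    fiberRank s key i < #{j ∈ s | key j = key i} := by
  refine card_lt_card ((ssubset_iff_of_subset ?_).2 ⟨i, ?_, ?_⟩)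
  · exact monotone_filter_right s fun _ _ h => h.1
  · simp [hi]
  · simp

theorem fiberRank_strictMono (hi : i ∈ s) (hkey : key i = key j) (hij : i < j) :
    fiberRank s key i < fiberRank s key j := by
  refine card_lt_card ((ssubset_iff_of_subset ?_).2 ⟨i, ?_, ?_⟩)
  · exact monotone_filter_right s fun _ _ hk => ⟨hk.1.trans hkey, hk.2.trans hij⟩
  · simp [hi, hkey, hij]
  · simp

theorem fiberRank_injOn (hi : i ∈ s) (hj : j ∈ s) (hkey : key i = key j) (hij : i ≠ j) :
    fiberRank s key i ≠ fiberRank s key j := by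
  rcases hij.lt_or_gt with h | h
  · exact (fiberRank_strictMono hi hkey h).ne
  · exact (fiberRank_strictMono hj hkey.symm h).ne'

end Finset

theorem fractional_to_integral_doubling_general
    (n L : ℕ)
    (x : ℕ → ℕ → ℝ) (M : ℕ → ℕ) (prec : ℕ → ℕ → Prop)
    -- at most 2 jobs per machine per slot
    (htwo : ∀ i t, ((Finset.range n).filter (fun l => M l = i ∧ 0 < x l t)).card ≤ 2)
    -- precedence respect
    (hprec : ∀ l₁ l₂ t t', prec l₁ l₂ → 0 < x l₁ t → t' ≤ t → x l₂ t' = 0)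
    -- every job receives positive total processing
    (hpos : ∀ l, l < n → ∃ t, 1 ≤ t ∧ t ≤ L ∧ 0 < x l t) :
    ∃ σ : ℕ → ℕ,
      (∀ l, l < n → 1 ≤ σ l ∧ σ l ≤ 2 * L) ∧
      (∀ l₁ l₂, l₁ < n → l₂ < n → l₁ ≠ l₂ → M l₁ = M l₂ → σ l₁ ≠ σ l₂) ∧
      (∀ l₁ l₂, l₁ < n → l₂ < n → prec l₁ l₂ → σ l₁ < σ l₂) := by
  choose! τ hτ using hpos
  set key : ℕ → ℕ × ℕ := fun l => (M l, τ l)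
  set rank := fiberRank (range n) key
  have hrank : ∀ l < n, rank l ≤ 1 := fun l hl => by
    have hlt : rank l < #{j ∈ range n | key j = key l} :=
      fiberRank_lt_card_fiber (key := key) (mem_range.2 hl)
    have hsub : {j ∈ range n | key j = key l} ⊆ {j ∈ range n | M j = M l ∧ 0 < x j (τ l)} :=
      monotone_filter_right _ fun j hj hkey => by
        obtain ⟨hM, hτj⟩ := Prod.mk.inj hkey
        exact ⟨hM, hτj ▸ (hτ j (mem_range.1 hj)).2.2⟩
    have := (card_le_card hsub).trans (htwo (M l) (τ l))
    omega
  refine ⟨fun l => 2 * τ l - 1 + rank l, fun l hl => ?_, fun l₁ l₂ h₁ h₂ hne hM => ?_,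
    fun l₁ l₂ h₁ h₂ hp => ?_⟩ <;> beta_reduce
  · have := hτ l hl
    have := hrank l hl
    omega
  · have := (hτ l₁ h₁).1
    have := (hτ l₂ h₂).1
    have := hrank l₁ h₁
    have := hrank l₂ h₂
    by_cases ht : τ l₁ = τ l₂
    · have : rank l₁ ≠ rank l₂ :=
        fiberRank_injOn (mem_range.2 h₁) (mem_range.2 h₂) (by simp [key, hM, ht]) hne
      omega
    · omega
  · have hlt : τ l₁ < τ l₂ := by
      by_contra! hle
      exact (hτ l₂ h₂).2.2.ne' (hprec l₁ l₂ _ _ hp (hτ l₁ h₁).2.2 hle)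
    have := (hτ l₁ h₁).1
    have := hrank l₁ h₁
    omega

/-- A fractional UMPS schedule of `n` unit-length jobs over `L` time slots
that processes at most 2 jobs per machine per slot, respects precedences, and gives
every job some positive processing, can be rounded to a feasible integral UMPS
schedule with makespan at most `2L`. -/
theorem fractional_to_integral_doubling
    (n L : ℕ)
    (x : ℕ → ℕ → ℝ) (M : ℕ → ℕ) (prec : ℕ → ℕ → Prop)
    (hnonneg : ∀ l t, 0 ≤ x l t)
    (hsupp : ∀ l t, 0 < x l t → l < n ∧ 1 ≤ t ∧ t ≤ L)
    -- at most 2 jobs per machine per slot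
    (htwo : ∀ i t, ((Finset.range n).filter (fun l => M l = i ∧ 0 < x l t)).card ≤ 2)
    -- precedence respect
    (hprec : ∀ l₁ l₂ t t', prec l₁ l₂ → 0 < x l₁ t → t' ≤ t → x l₂ t' = 0)
    -- every job receives positive total processing
    (hpos : ∀ l, l < n → ∃ t, 1 ≤ t ∧ t ≤ L ∧ 0 < x l t) :
    ∃ σ : ℕ → ℕ,
      (∀ l, l < n → 1 ≤ σ l ∧ σ l ≤ 2 * L) ∧
      (∀ l₁ l₂, l₁ < n → l₂ < n → l₁ ≠ l₂ → M l₁ = M l₂ → σ l₁ ≠ σ l₂) ∧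
      (∀ l₁ l₂, l₁ < n → l₂ < n → prec l₁ l₂ → σ l₁ < σ l₂) :=
  fractional_to_integral_doubling_general n L x M prec htwo hprec hpos
end

section
/- Completeness of the k-partite reduction (timing inequality): let Q = k, ε = 1/k, and suppose a k-partite graph on parts V_1,...,V_k each of size n admits partitions V_i = V_{i,0} ∪ ... ∪ V_{i,Q−1} with |V_{i,j}| ≥ (1−ε)n/Q for all i,j, and no edge between V_{i,j₁} and V_{i+1,j₂} when j₁ > j₂. Define t_i = (i−1)·n·(ε + 1/Q). Then for every edge (u,v) with u ∈ V_{i,j₁}, v ∈ V_{i+1,j₂} (so j₁ ≤ j₂), we have t_{i+1} + ∑_{j<j₂} |V_{i+1,j}| ≥ t_i + ∑_{j≤j₁} |V_{i,j}|, i.e., v's earliest start time is no earlier than u's latest completion time in the staggered schedule. -/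
/-! Blocks of machine `i` after block `j₁` take at least `(k - 1 - j₁) c` time, where
`c = (1 - 1/k) n / k` is the block-size lower bound, so `u` completes by
`t_i + n - (k - 1 - j₁) c`; the blocks of machine `i + 1` before block `j₂ ≥ j₁` take at
least `j₂ c`. The stagger `2n/k` between `t_i` and `t_{i+1}` covers the remaining gap
because `2n/k + (k - 1) c = n + n/k² ≥ n`. -/

open Finset

lemma sum_range_le_sub_mul_of_le {f : ℕ → ℝ} {m k : ℕ} {total c : ℝ} (hmk : m ≤ k)
    (hsum : ∑ j ∈ range k, f j = total) (hlb : ∀ j, m ≤ j → j < k → c ≤ f j) :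
    ∑ j ∈ range m, f j ≤ total - ((k : ℝ) - m) * c := by
  have htail : #(Ico m k) • c ≤ ∑ j ∈ Ico m k, f j :=
    card_nsmul_le_sum _ _ _ fun j hj => hlb j (mem_Ico.1 hj).1 (mem_Ico.1 hj).2
  rw [Nat.card_Ico, nsmul_eq_mul, Nat.cast_sub hmk] at htail
  rw [← hsum, ← sum_range_add_sum_Ico _ hmk]
  linarith

lemma le_two_div_add_sub_one_mul_blockBound {k : ℕ} (hk : k ≠ 0) (n : ℝ) (hn : 0 ≤ n) :
    n ≤ n * (1 / k + 1 / k) + ((k : ℝ) - 1) * ((1 - 1 / (k : ℝ)) * n / k) := by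
  have hk' : (k : ℝ) ≠ 0 := Nat.cast_ne_zero.2 hk
  have hexpand : n * (1 / k + 1 / k) + ((k : ℝ) - 1) * ((1 - 1 / (k : ℝ)) * n / k)
      = n + n / (k * k) := by
    field_simp
    ring
  rw [hexpand]
  have : 0 ≤ n / (k * k) := by positivity
  linarith

theorem kpartite_timing_inequality_general
    (k n : ℕ)
    (a : ℕ → ℕ → ℕ)
    (hsum : ∀ i, 1 ≤ i → i ≤ k → ∑ j ∈ Finset.range k, a i j = n)
    (hlb : ∀ i j, 1 ≤ i → i ≤ k → j < k →
      (1 - 1 / (k : ℝ)) * n / k ≤ (a i j : ℝ))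
    (i j₁ j₂ : ℕ) (hi : 1 ≤ i) (hik : i + 1 ≤ k) (hj : j₁ ≤ j₂) (hj₂ : j₂ < k) :
    ((i : ℝ) - 1) * n * (1 / k + 1 / k) + ∑ j ∈ Finset.range (j₁ + 1), (a i j : ℝ)
      ≤ (((i + 1 : ℕ) : ℝ) - 1) * n * (1 / k + 1 / k)
          + ∑ j ∈ Finset.range j₂, (a (i + 1) j : ℝ) := by
  set c : ℝ := (1 - 1 / (k : ℝ)) * n / k
  have hc : 0 ≤ c := by
    have : (1 : ℝ) / k ≤ 1 := div_le_one_of_le₀ (by norm_cast; omega) k.cast_nonneg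
    exact div_nonneg (mul_nonneg (by linarith) n.cast_nonneg) k.cast_nonneg
  have hdone : ∑ j ∈ range (j₁ + 1), (a i j : ℝ) ≤ n - ((k : ℝ) - (j₁ + 1 : ℕ)) * c :=
    sum_range_le_sub_mul_of_le (by omega) (by exact_mod_cast hsum i hi (by omega))
      fun j _ hjk => hlb i j hi (by omega) hjk
  have hstart : (j₂ : ℝ) * c ≤ ∑ j ∈ range j₂, (a (i + 1) j : ℝ) := by
    simpa using card_nsmul_le_sum (range j₂) (fun j => (a (i + 1) j : ℝ)) c
      fun j hj => hlb (i + 1) j (by omega) hik (by simp at hj; omega)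
  have hgap : ((k : ℝ) - 1) * c ≤ ((k : ℝ) - (j₁ + 1 : ℕ) + j₂) * c :=
    mul_le_mul_of_nonneg_right (by push_cast; linarith [(Nat.cast_le (α := ℝ)).2 hj]) hc
  have hstagger := le_two_div_add_sub_one_mul_blockBound (by omega : k ≠ 0) (n : ℝ) n.cast_nonneg
  push_cast
  linarith

/-- Completeness of the k-partite reduction (timing inequality).
With `Q = k`, `ε = 1/k`, block sizes `a i j = |V_{i,j}|` satisfying
`∑_{j<k} a i j = n` and `a i j ≥ (1-ε)n/Q`, and staggered start times
`t_i = (i-1)·n·(ε + 1/Q)`, for every `j₁ ≤ j₂ < k` (as given by an edge of the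
YES-case partition) we have
`t_{i+1} + ∑_{j<j₂} a_{i+1,j} ≥ t_i + ∑_{j≤j₁} a_{i,j}`. -/
theorem kpartite_timing_inequality
    (k n : ℕ) (hk : 1 ≤ k)
    (a : ℕ → ℕ → ℕ)
    (hsum : ∀ i, 1 ≤ i → i ≤ k → ∑ j ∈ Finset.range k, a i j = n)
    (hlb : ∀ i j, 1 ≤ i → i ≤ k → j < k →
      (1 - 1 / (k : ℝ)) * n / k ≤ (a i j : ℝ))
    (i j₁ j₂ : ℕ) (hi : 1 ≤ i) (hik : i + 1 ≤ k) (hj : j₁ ≤ j₂) (hj₂ : j₂ < k) :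
    ((i : ℝ) - 1) * n * (1 / k + 1 / k) + ∑ j ∈ Finset.range (j₁ + 1), (a i j : ℝ)
      ≤ (((i + 1 : ℕ) : ℝ) - 1) * n * (1 / k + 1 / k)
          + ∑ j ∈ Finset.range j₂, (a (i + 1) j : ℝ) :=
  kpartite_timing_inequality_general k n a hsum hlb i j₁ j₂ hi hik hj hj₂
end

section
/- Completeness of the k-partite reduction (makespan bound): under the YES-case hypotheses of the previous statement with Q = k and ε = 1/k, the staggered schedule of the derived UMPS instance (n·k unit jobs, vertex u ∈ V_i assignable only to machine i, precedence u ≺ v for each edge (u,v) with u ∈ V_i, v ∈ V_{i+1}) is feasible and has makespan at most t_k + n = (k−1)·n·(1/k + 1/k) + n ≤ 3n. -/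
/-!
Schedule the part `V_i` on machine `i` in order of color, starting at time `(i - 1)·2n/k`.
Every block has at least `m = (1 - 1/k)·n/k` vertices. Across an edge `u → v` with
`color u = a ≤ color v`, the at least `(k - 1 - a)·m` vertices of `V_i` of larger color come
after `u`, and the at least `a·m` vertices of `V_{i+1}` of smaller color come before `v`.
So `u` sits at most `n - (k - 1)·m ≤ 2n/k` places further down its machine than `v`, which the
stagger absorbs.
-/

open Finset

section Rank

variable {α β : Type*} [LinearOrder β]

def rankBy (s : Finset α) (f : α → β) (a : α) : ℕ := #{x ∈ s | f x < f a}

variable {s : Finset α} {f : α → β} {a b : α}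

lemma rankBy_lt_card_filter {p : α → Prop} [DecidablePred p] (ha : a ∈ s)
    (hp : ∀ x ∈ s, f x ≤ f a → p x) : rankBy s f a < #{x ∈ s | p x} := by
  refine card_lt_card ⟨fun x hx => ?_, fun h => ?_⟩
  · rw [mem_filter] at hx ⊢
    exact ⟨hx.1, hp x hx.1 hx.2.le⟩
  · exact lt_irrefl (f a) (mem_filter.mp (h (mem_filter.mpr ⟨ha, hp a ha le_rfl⟩))).2

lemma rankBy_lt_card (ha : a ∈ s) : rankBy s f a < #s := by
  simpa using rankBy_lt_card_filter (p := fun _ => True) ha (fun _ _ _ => trivial)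

lemma rankBy_lt_rankBy (ha : a ∈ s) (hab : f a < f b) : rankBy s f a < rankBy s f b :=
  rankBy_lt_card_filter ha fun _ _ hx => hx.trans_lt hab

lemma card_filter_le_rankBy {p : α → Prop} [DecidablePred p]
    (hp : ∀ x ∈ s, p x → f x < f a) : #{x ∈ s | p x} ≤ rankBy s f a :=
  card_le_card fun x hx => by
    rw [mem_filter] at hx ⊢
    exact ⟨hx.1, hp x hx.1 hx.2⟩

end Rank

lemma card_mul_le_card_filter_mem {α β : Type*} [DecidableEq β] {s : Finset α} {c : α → β}
    {T : Finset β} {m : ℝ} (hT : ∀ j ∈ T, m ≤ #{x ∈ s | c x = j}) :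
    #T * m ≤ #{x ∈ s | c x ∈ T} := by
  rw [← sum_card_fiberwise_eq_card_filter, Nat.cast_sum, ← nsmul_eq_mul]
  exact card_nsmul_le_sum _ _ _ hT

section ColorRank

variable {α : Type*} [LinearOrder α] {s : Finset α} {c c' : α → ℕ} {k : ℕ} {m : ℝ}
  {u v : α}

abbrev colorRank (s : Finset α) (c : α → ℕ) : α → ℕ := rankBy s fun x => toLex (c x, x)

lemma colorRank_add_one_le_of_color_le (hm : 0 ≤ m)
    (hc : ∀ j < k, m ≤ #{x ∈ s | c x = j}) (hc' : ∀ j < k, m ≤ #{x ∈ s | c' x = j})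
    (hu : u ∈ s) (huv : c u ≤ c' v) :
    (colorRank s c u : ℝ) + 1 + (k - 1) * m ≤ #s + colorRank s c' v := by
  set a := c u
  have hbefore : (colorRank s c u : ℝ) + 1 ≤ #{x ∈ s | c x ≤ a} :=
    mod_cast rankBy_lt_card_filter hu fun x _ hx => Prod.Lex.monotone_fst _ _ hx
  have hsplit : (#{x ∈ s | c x ≤ a} : ℝ) + #{x ∈ s | c x ∈ Ico (a + 1) k} ≤ #s := by
    rw [← card_filter_add_card_filter_not (s := s) (fun x => c x ≤ a), Nat.cast_add]
    gcongr with x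
    rw [mem_Ico]
    omega
  have hhigh : (#(Ico (a + 1) k) : ℝ) * m ≤ #{x ∈ s | c x ∈ Ico (a + 1) k} :=
    card_mul_le_card_filter_mem fun j hj => hc j (mem_Ico.mp hj).2
  have hlow : (#(range (min a k)) : ℝ) * m ≤ colorRank s c' v := by
    refine (card_mul_le_card_filter_mem fun j hj => hc' j ?_).trans ?_
    · exact (mem_range.mp hj).trans_le (min_le_right a k)
    · refine mod_cast card_filter_le_rankBy (f := fun x => toLex (c' x, x)) fun x _ hx => ?_
      exact Prod.Lex.toLex_lt_toLex.mpr <| .inl <|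
        (mem_range.mp hx).trans_le ((min_le_left a k).trans huv)
  have hcount : (k : ℝ) - 1 ≤ #(range (min a k)) + #(Ico (a + 1) k) := by
    rw [card_range, Nat.card_Ico]
    have hk : k ≤ min a k + (k - (a + 1)) + 1 := by omega
    have hk' : (k : ℝ) ≤ (min a k : ℕ) + (k - (a + 1) : ℕ) + 1 := by exact_mod_cast hk
    linarith
  have hcount' := mul_le_mul_of_nonneg_right hcount hm
  linarith

end ColorRank

lemma self_sub_mul_block_le_two_mul_div {k : ℕ} (hk : 1 ≤ k) {n : ℝ} (hn : 0 ≤ n) :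
    n - (k - 1) * ((1 - 1 / k) * n / k) ≤ 2 * n / k := by
  have hk' : (0 : ℝ) < k := by exact_mod_cast hk
  have hgap : 2 * n / k - (n - (k - 1) * ((1 - 1 / k) * n / k)) = n / k ^ 2 := by
    field_simp
    ring
  have : 0 ≤ n / (k : ℝ) ^ 2 := by positivity
  linarith

lemma natCast_mul_div_le {i k : ℕ} (hik : i ≤ k) {x : ℝ} (hx : 0 ≤ x) :
    (i : ℝ) * (x / k) ≤ x := by
  rw [mul_div_left_comm]
  exact mul_le_of_le_one_right hx (div_le_one_of_le₀ (by exact_mod_cast hik) k.cast_nonneg)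

theorem kpartite_completeness_makespan_general
    (k n : ℕ)
    (c : ℕ → ℕ → ℕ)
    (hblock : ∀ i j, 1 ≤ i → i ≤ k → j < k →
      (1 - 1 / (k : ℝ)) * n / k ≤
        (((Finset.range n).filter (fun v => c i v = j)).card : ℝ))
    (E : ℕ → ℕ → ℕ → Prop)  -- E i u v : edge between u ∈ V_i and v ∈ V_{i+1}
    (hyes : ∀ i u v, 1 ≤ i → i + 1 ≤ k → u < n → v < n → E i u v →
      c i u ≤ c (i + 1) v) :
    ∃ s : ℕ → ℕ → ℝ,  -- s i v : start time of the unit job of vertex v ∈ V_i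
      (∀ i v, 1 ≤ i → i ≤ k → v < n → 0 ≤ s i v) ∧
      -- precedences: each edge forces u to finish before v starts
      (∀ i u v, 1 ≤ i → i + 1 ≤ k → u < n → v < n → E i u v →
        s i u + 1 ≤ s (i + 1) v) ∧
      -- unit jobs of V_i, all on machine i, occupy disjoint intervals
      (∀ i u v, 1 ≤ i → i ≤ k → u < n → v < n → u ≠ v →
        (s i u + 1 ≤ s i v ∨ s i v + 1 ≤ s i u)) ∧
      -- makespan at most 3n
      (∀ i v, 1 ≤ i → i ≤ k → v < n → s i v + 1 ≤ 3 * n) := by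
  have hm : 0 ≤ (1 - 1 / (k : ℝ)) * n / k := by
    have : 1 / (k : ℝ) ≤ 1 := by simpa using Nat.cast_inv_le_one k
    have : 0 ≤ 1 - 1 / (k : ℝ) := by linarith
    positivity
  refine ⟨fun i v => ((i - 1 : ℕ) : ℝ) * (2 * n / k) + colorRank (range n) (c i) v,
    fun i v _ _ _ => by positivity, ?_, ?_, ?_⟩
  · intro i u v hi hik hu hv huv
    have htiming := colorRank_add_one_le_of_color_le hm
      (fun j hj => hblock i j hi (by omega) hj) (fun j hj => hblock (i + 1) j (by omega) hik hj)
      (mem_range.mpr hu) (hyes i u v hi hik hu hv huv)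
    have hstagger := self_sub_mul_block_le_two_mul_div (k := k) (by omega) n.cast_nonneg
    rw [card_range] at htiming
    simp only [Nat.add_sub_cancel, Nat.cast_sub hi, Nat.cast_one]
    linarith
  · intro i u v _ _ hu hv huv
    have hsep {x y : ℕ} (hx : x < n) (hxy : toLex (c i x, x) < toLex (c i y, y)) :
        (colorRank (range n) (c i) x : ℝ) + 1 ≤ colorRank (range n) (c i) y := by
      exact_mod_cast rankBy_lt_rankBy (mem_range.mpr hx) hxy
    rcases lt_or_gt_of_ne (show toLex (c i u, u) ≠ toLex (c i v, v) by simp [huv]) with h | h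
    · exact Or.inl (by linarith [hsep hu h])
    · exact Or.inr (by linarith [hsep hv h])
  · intro i v hi hik hv
    have hlast : (colorRank (range n) (c i) v : ℝ) + 1 ≤ n := by
      exact_mod_cast card_range n ▸ rankBy_lt_card (mem_range.mpr hv)
    have hstart := natCast_mul_div_le (k := k) (i := i - 1) (by omega) (x := 2 * n) (by positivity)
    linarith

/-- Completeness of the k-partite reduction (makespan bound).
Under the YES-case hypotheses with `Q = k` and `ε = 1/k` (parts `V_i` of size `n`
with a block-coloring `c i · : V_i → {0,...,k-1}`, blocks of size at least `(1-ε)n/Q`,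
and every edge `(u,v)` from `V_i` to `V_{i+1}` satisfying `c i u ≤ c (i+1) v`),
the derived UMPS instance (`n·k` unit jobs, vertex `v ∈ V_i` only on machine `i`,
precedence `u ≺ v` for each edge) admits a feasible schedule with makespan at
most `3n`. -/
theorem kpartite_completeness_makespan
    (k n : ℕ) (hk : 1 ≤ k)
    (c : ℕ → ℕ → ℕ)
    (hcolor : ∀ i v, 1 ≤ i → i ≤ k → v < n → c i v < k)
    (hblock : ∀ i j, 1 ≤ i → i ≤ k → j < k →
      (1 - 1 / (k : ℝ)) * n / k ≤
        (((Finset.range n).filter (fun v => c i v = j)).card : ℝ))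
    (E : ℕ → ℕ → ℕ → Prop)  -- E i u v : edge between u ∈ V_i and v ∈ V_{i+1}
    (hyes : ∀ i u v, 1 ≤ i → i + 1 ≤ k → u < n → v < n → E i u v →
      c i u ≤ c (i + 1) v) :
    ∃ s : ℕ → ℕ → ℝ,  -- s i v : start time of the unit job of vertex v ∈ V_i
      (∀ i v, 1 ≤ i → i ≤ k → v < n → 0 ≤ s i v) ∧
      -- precedences: each edge forces u to finish before v starts
      (∀ i u v, 1 ≤ i → i + 1 ≤ k → u < n → v < n → E i u v →
        s i u + 1 ≤ s (i + 1) v) ∧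
      -- unit jobs of V_i, all on machine i, occupy disjoint intervals
      (∀ i u v, 1 ≤ i → i ≤ k → u < n → v < n → u ≠ v →
        (s i u + 1 ≤ s i v ∨ s i v + 1 ≤ s i u)) ∧
      -- makespan at most 3n
      (∀ i v, 1 ≤ i → i ≤ k → v < n → s i v + 1 ≤ 3 * n) :=
  kpartite_completeness_makespan_general k n c hblock E hyes
end

section
/- Completeness of the UMPS-to-related-machines reduction: if a UMPS instance I with unit-length jobs admits a feasible schedule of makespan L, then the related-machines instance I' (for each UMPS machine i, a set ℳ_i of κ^{2(m−i)} machines of speed κ^{i−1}; for each job l, a set 𝒥_l of κ^{2(m−M(l))} jobs of processing requirement κ^{M(l)−1}, with all-pairs precedences 𝒥_u ≺ 𝒥_v whenever j_u ≺ j_v) admits a feasible schedule of makespan at most L, by scheduling all of 𝒥_l on the machines ℳ_{M(l)} (one job per machine) in the time slot of j_l. -/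
/-!
Copy `b` of job `l` runs on machine `(M l, b)` during the unit slot `[s l, s l + 1)` of the
UMPS schedule. Its running time is `κ^(M l - 1) / κ^(M l - 1) ≤ 1` (equal to `1` for `κ > 0`,
and `0` or `1` when `κ = 0` since `x / 0 = 0`), so every precedence and the
makespan bound carry over from the UMPS schedule, and two copies sharing a machine come from
distinct jobs with the same UMPS machine, which occupy distinct unit slots.
-/

lemma Nat.cast_add_le_of_add_one_le {a b : ℕ} {d : ℝ} (hab : a + 1 ≤ b) (hd : d ≤ 1) :
    (a : ℝ) + d ≤ b := by
  have : (a : ℝ) + 1 ≤ b := by exact_mod_cast hab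
  linarith

lemma unit_slots_disjoint {a b : ℕ} {d d' : ℝ} (hab : a ≠ b) (hd : d ≤ 1) (hd' : d' ≤ 1) :
    (a : ℝ) + d ≤ b ∨ (b : ℝ) + d' ≤ a := by
  rcases Nat.lt_or_gt_of_ne hab with h | h
  · exact Or.inl (Nat.cast_add_le_of_add_one_le h hd)
  · exact Or.inr (Nat.cast_add_le_of_add_one_le h hd')

theorem related_machines_completeness_general
    (n m L : ℕ)
    (κ : ℕ)
    (M : ℕ → ℕ) (hM : ∀ l, l < n → 1 ≤ M l ∧ M l ≤ m)
    (prec : ℕ → ℕ → Prop)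
    (s : ℕ → ℕ)
    (hfeas_prec : ∀ u v, u < n → v < n → prec u v → s u + 1 ≤ s v)
    (hfeas_mach : ∀ u v, u < n → v < n → u ≠ v → M u = M v → s u ≠ s v)
    (hmakespan : ∀ l, l < n → s l + 1 ≤ L) :
    ∃ (A : ℕ → ℕ → ℕ × ℕ) (σ : ℕ → ℕ → ℝ),
      -- every job (l,b) is assigned a valid machine
      (∀ l b, l < n → b < κ ^ (2 * (m - M l)) →
        1 ≤ (A l b).1 ∧ (A l b).1 ≤ m ∧ (A l b).2 < κ ^ (2 * (m - (A l b).1))) ∧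
      -- start times are nonnegative
      (∀ l b, l < n → b < κ ^ (2 * (m - M l)) → 0 ≤ σ l b) ∧
      -- precedences: all copies of u finish before any copy of v starts
      (∀ u v bu bv, u < n → v < n → bu < κ ^ (2 * (m - M u)) →
        bv < κ ^ (2 * (m - M v)) → prec u v →
        σ u bu + (κ : ℝ) ^ (M u - 1) / (κ : ℝ) ^ ((A u bu).1 - 1) ≤ σ v bv) ∧
      -- jobs on the same machine occupy disjoint intervals
      (∀ l b l' b', l < n → l' < n → b < κ ^ (2 * (m - M l)) →
        b' < κ ^ (2 * (m - M l')) → (l, b) ≠ (l', b') → A l b = A l' b' →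
        (σ l b + (κ : ℝ) ^ (M l - 1) / (κ : ℝ) ^ ((A l b).1 - 1) ≤ σ l' b' ∨
         σ l' b' + (κ : ℝ) ^ (M l' - 1) / (κ : ℝ) ^ ((A l' b').1 - 1) ≤ σ l b)) ∧
      -- makespan at most L
      (∀ l b, l < n → b < κ ^ (2 * (m - M l)) →
        σ l b + (κ : ℝ) ^ (M l - 1) / (κ : ℝ) ^ ((A l b).1 - 1) ≤ L) := by
  refine ⟨fun l b => (M l, b), fun l _ => (s l : ℝ), ?_, ?_, ?_, ?_, ?_⟩
  · intro l b hl hb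
    exact ⟨(hM l hl).1, (hM l hl).2, hb⟩
  · intro l b _ _
    positivity
  · intro u v _ _ hu hv _ _ huv
    exact Nat.cast_add_le_of_add_one_le (hfeas_prec u v hu hv huv) (div_self_le_one _)
  · intro l b l' b' hl hl' _ _ hne hA
    obtain ⟨hMl, rfl⟩ := Prod.mk.inj hA
    have hll' : l ≠ l' := fun h => hne (h ▸ rfl)
    exact unit_slots_disjoint (hfeas_mach l l' hl hl' hll' hMl)
      (div_self_le_one _) (div_self_le_one _)
  · intro l b hl _
    exact Nat.cast_add_le_of_add_one_le (hmakespan l hl) (div_self_le_one _)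

/-- Completeness of the UMPS-to-related-machines reduction.
If a UMPS instance with `n` unit-length jobs (machine assignment `M : jobs → [m]`,
precedences `prec`) admits a feasible schedule `s` of makespan `L`, then the derived
related-machines instance (machines `(i,a)` with `1 ≤ i ≤ m`, `a < κ^(2(m-i))`, of
speed `κ^(i-1)`; jobs `(l,b)` with `l < n`, `b < κ^(2(m-M l))`, of processing
requirement `κ^(M l - 1)`; all-pairs precedences between the groups `𝒥_u ≺ 𝒥_v`
whenever `prec u v`) admits a feasible schedule of makespan at most `L`. -/
theorem related_machines_completeness
    (n m L : ℕ) (hm : 1 ≤ m)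
    (κ : ℕ) (hκ : κ = 10 * n ^ 3 * m)
    (M : ℕ → ℕ) (hM : ∀ l, l < n → 1 ≤ M l ∧ M l ≤ m)
    (prec : ℕ → ℕ → Prop)
    (s : ℕ → ℕ)
    (hfeas_prec : ∀ u v, u < n → v < n → prec u v → s u + 1 ≤ s v)
    (hfeas_mach : ∀ u v, u < n → v < n → u ≠ v → M u = M v → s u ≠ s v)
    (hmakespan : ∀ l, l < n → s l + 1 ≤ L) :
    ∃ (A : ℕ → ℕ → ℕ × ℕ) (σ : ℕ → ℕ → ℝ),
      -- every job (l,b) is assigned a valid machine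
      (∀ l b, l < n → b < κ ^ (2 * (m - M l)) →
        1 ≤ (A l b).1 ∧ (A l b).1 ≤ m ∧ (A l b).2 < κ ^ (2 * (m - (A l b).1))) ∧
      -- start times are nonnegative
      (∀ l b, l < n → b < κ ^ (2 * (m - M l)) → 0 ≤ σ l b) ∧
      -- precedences: all copies of u finish before any copy of v starts
      (∀ u v bu bv, u < n → v < n → bu < κ ^ (2 * (m - M u)) →
        bv < κ ^ (2 * (m - M v)) → prec u v →
        σ u bu + (κ : ℝ) ^ (M u - 1) / (κ : ℝ) ^ ((A u bu).1 - 1) ≤ σ v bv) ∧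
      -- jobs on the same machine occupy disjoint intervals
      (∀ l b l' b', l < n → l' < n → b < κ ^ (2 * (m - M l)) →
        b' < κ ^ (2 * (m - M l')) → (l, b) ≠ (l', b') → A l b = A l' b' →
        (σ l b + (κ : ℝ) ^ (M l - 1) / (κ : ℝ) ^ ((A l b).1 - 1) ≤ σ l' b' ∨
         σ l' b' + (κ : ℝ) ^ (M l' - 1) / (κ : ℝ) ^ ((A l' b').1 - 1) ≤ σ l b)) ∧
      -- makespan at most L
      (∀ l b, l < n → b < κ ^ (2 * (m - M l)) →
        σ l b + (κ : ℝ) ^ (M l - 1) / (κ : ℝ) ^ ((A l b).1 - 1) ≤ L) :=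
  related_machines_completeness_general n m L κ M hM prec s hfeas_prec hfeas_mach hmakespan
end

section
/- Swap operation preserves feasibility: let x be a fractional UMPS schedule respecting precedences, and let l₁, l₂ ∈ J(i) and slots t < t' satisfy x_{l₂,t} > 0, x_{l₁,t'} > 0, and t^s_{l₁} ≤ t < t^e_{l₁}. Setting y = min(x_{l₁,t'}, x_{l₂,t}) and updating x_{l₁,t} += y, x_{l₁,t'} −= y, x_{l₂,t} −= y, x_{l₂,t'} += y yields a schedule with the same per-slot machine loads ∑_{l∈J(i)} x_{l,s} for every slot s, the same total processing ∑_s x_{l,s} for every job, and in which no job's ending time t^e increases and no job's starting time t^s decreases; consequently the new schedule still respects precedences. -/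
open scoped Classical

/-- Start time of job `l`: first slot with positive processing. -/
noncomputable def tsOf (x : ℕ → ℕ → ℝ) (l : ℕ) : ℕ := sInf {t | 0 < x l t}

/-- Ending time of job `l`: last slot with positive processing. -/
noncomputable def teOf (x : ℕ → ℕ → ℝ) (l : ℕ) : ℕ := sSup {t | 0 < x l t}

/-!
Moving `y` units of `l₁` from `t'` to `t` and `y` units of `l₂` from `t` to `t'` changes
each affected row and column by `+y` and `-y`, so all machine loads and job totals are kept.
Since `y ≥ 0`, the only slots that can become active are `t` for `l₁` and `t'` for `l₂`.
Both already lie in the old window `[tˢ, tᵉ]` of their job: `t ≥ tˢ_{l₁}` by assumption and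
`t < t' ≤ tᵉ_{l₁}`; `t' > t ≥ tˢ_{l₂}` and `t' ≤ tᵉ_{l₁} ≤ tᵉ_{l₂}`. Hence every window
shrinks, and strict precedence gaps survive.
-/

theorem Finset.sum_eq_sum_of_eq_off_pair {ι M : Type*} [DecidableEq ι] [AddCommMonoid M]
    {s : Finset ι} {f g : ι → M} {a b : ι} (hab : a ≠ b) (hmem : a ∈ s ↔ b ∈ s)
    (hoff : ∀ i, i ≠ a → i ≠ b → f i = g i) (hpair : f a + f b = g a + g b) :
    ∑ i ∈ s, f i = ∑ i ∈ s, g i := by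
  by_cases ha : a ∈ s
  · have hb : b ∈ (s.erase a) := Finset.mem_erase.2 ⟨hab.symm, hmem.1 ha⟩
    rw [← Finset.add_sum_erase s f ha, ← Finset.add_sum_erase s g ha,
      ← Finset.add_sum_erase _ f hb, ← Finset.add_sum_erase _ g hb, ← add_assoc, ← add_assoc,
      hpair]
    refine congrArg _ (Finset.sum_congr rfl fun i hi ↦ ?_)
    obtain ⟨hib, hi⟩ := Finset.mem_erase.1 hi
    obtain ⟨hia, -⟩ := Finset.mem_erase.1 hi
    exact hoff i hia hib
  · refine Finset.sum_congr rfl fun i hi ↦ hoff i ?_ ?_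
    · rintro rfl; exact ha hi
    · rintro rfl; exact ha (hmem.2 hi)

section swap

variable {ι κ R : Type*} [DecidableEq ι] [DecidableEq κ]

def swapProcessing [Add R] [Sub R] (x : ι → κ → R) (l₁ l₂ : ι) (t t' : κ) (y : R) :
    ι → κ → R := fun l u =>
  if l = l₁ ∧ u = t then x l u + y
  else if l = l₁ ∧ u = t' then x l u - y
  else if l = l₂ ∧ u = t then x l u - y
  else if l = l₂ ∧ u = t' then x l u + y
  else x l u

variable [AddCommGroup R] {x : ι → κ → R} {l₁ l₂ l : ι} {t t' u : κ} {y : R}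

theorem swapProcessing_apply_of_ne_jobs (h₁ : l ≠ l₁) (h₂ : l ≠ l₂) :
    swapProcessing x l₁ l₂ t t' y l u = x l u := by
  simp [swapProcessing, h₁, h₂]

theorem swapProcessing_apply_of_ne_slots (h : u ≠ t) (h' : u ≠ t') :
    swapProcessing x l₁ l₂ t t' y l u = x l u := by
  simp [swapProcessing, h, h']

theorem swapProcessing_apply_left_left : swapProcessing x l₁ l₂ t t' y l₁ t = x l₁ t + y := by
  simp [swapProcessing]

theorem swapProcessing_apply_left_right (ht : t' ≠ t) :
    swapProcessing x l₁ l₂ t t' y l₁ t' = x l₁ t' - y := by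
  simp [swapProcessing, ht]

theorem swapProcessing_apply_right_left (hl : l₂ ≠ l₁) :
    swapProcessing x l₁ l₂ t t' y l₂ t = x l₂ t - y := by
  simp [swapProcessing, hl]

theorem swapProcessing_apply_right_right (hl : l₂ ≠ l₁) (ht : t' ≠ t) :
    swapProcessing x l₁ l₂ t t' y l₂ t' = x l₂ t' + y := by
  simp [swapProcessing, hl, ht]

theorem sum_swapProcessing_jobs {s : Finset ι} (hl : l₁ ≠ l₂) (hmem : l₁ ∈ s ↔ l₂ ∈ s) (u : κ) :
    ∑ l ∈ s, swapProcessing x l₁ l₂ t t' y l u = ∑ l ∈ s, x l u := by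
  refine Finset.sum_eq_sum_of_eq_off_pair hl hmem
    (fun l h₁ h₂ ↦ swapProcessing_apply_of_ne_jobs h₁ h₂) ?_
  by_cases hut : u = t
  · subst hut
    rw [swapProcessing_apply_left_left, swapProcessing_apply_right_left hl.symm]
    abel
  by_cases hut' : u = t'
  · subst hut'
    rw [swapProcessing_apply_left_right hut, swapProcessing_apply_right_right hl.symm hut]
    abel
  rw [swapProcessing_apply_of_ne_slots hut hut', swapProcessing_apply_of_ne_slots hut hut']

theorem sum_swapProcessing_slots {s : Finset κ} (ht : t ≠ t') (hmem : t ∈ s ↔ t' ∈ s) (l : ι) :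
    ∑ u ∈ s, swapProcessing x l₁ l₂ t t' y l u = ∑ u ∈ s, x l u := by
  refine Finset.sum_eq_sum_of_eq_off_pair ht hmem
    (fun u h h' ↦ swapProcessing_apply_of_ne_slots h h') ?_
  by_cases hl₁ : l = l₁
  · subst hl₁
    rw [swapProcessing_apply_left_left, swapProcessing_apply_left_right ht.symm]
    abel
  by_cases hl₂ : l = l₂
  · subst hl₂
    rw [swapProcessing_apply_right_left hl₁, swapProcessing_apply_right_right hl₁ ht.symm]
    abel
  rw [swapProcessing_apply_of_ne_jobs hl₁ hl₂, swapProcessing_apply_of_ne_jobs hl₁ hl₂]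

theorem pos_of_swapProcessing_pos [PartialOrder R] [IsOrderedAddMonoid R] (hy : 0 ≤ y)
    (h : 0 < swapProcessing x l₁ l₂ t t' y l u) :
    0 < x l u ∨ (l = l₁ ∧ u = t) ∨ (l = l₂ ∧ u = t') := by
  have of_sub : 0 < x l u - y → 0 < x l u := fun h ↦ hy.trans_lt (sub_pos.1 h)
  unfold swapProcessing at h
  split_ifs at h with h₁ _ _ h₄
  · exact .inr (.inl h₁)
  · exact .inl (of_sub h)
  · exact .inl (of_sub h)
  · exact .inr (.inr h₄)
  · exact .inl h

end swap

theorem tsOf_le {x : ℕ → ℕ → ℝ} {l u : ℕ} (h : 0 < x l u) : tsOf x l ≤ u :=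
  Nat.sInf_le h

theorem le_teOf {x : ℕ → ℕ → ℝ} {l u : ℕ} (hbdd : BddAbove {v | 0 < x l v}) (h : 0 < x l u) :
    u ≤ teOf x l :=
  le_csSup hbdd h

section windows

variable {x x' : ℕ → ℕ → ℝ} {l p : ℕ}

theorem tsOf_congr (h : x' l = x l) : tsOf x' l = tsOf x l := by
  simp only [tsOf, h]

theorem teOf_congr (h : x' l = x l) : teOf x' l = teOf x l := by
  simp only [teOf, h]

theorem teOf_le_teOf_of_support_subset (hbdd : BddAbove {u | 0 < x l u}) (hp : p ≤ teOf x l)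
    (hsupp : ∀ u, 0 < x' l u → 0 < x l u ∨ u = p) : teOf x' l ≤ teOf x l := by
  refine csSup_le' fun u hu ↦ ?_
  rcases hsupp u hu with hu | rfl
  exacts [le_teOf hbdd hu, hp]

-- `hpos` is needed because an empty support has `tsOf = sInf ∅ = 0`.
theorem tsOf_le_tsOf_of_support_subset (hp : tsOf x l ≤ p) (hpos : 0 < x' l p)
    (hsupp : ∀ u, 0 < x' l u → 0 < x l u ∨ u = p) : tsOf x l ≤ tsOf x' l := by
  refine le_csInf ⟨p, hpos⟩ fun u hu ↦ ?_
  rcases hsupp u hu with hu | rfl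
  exacts [tsOf_le hu, hp]

end windows

section swapWindows

variable {x : ℕ → ℕ → ℝ} {l₁ l₂ t t' : ℕ} {y : ℝ}

theorem support_swapProcessing_left (hl : l₁ ≠ l₂) (hy : 0 ≤ y) (u : ℕ)
    (h : 0 < swapProcessing x l₁ l₂ t t' y l₁ u) : 0 < x l₁ u ∨ u = t := by
  rcases pos_of_swapProcessing_pos hy h with h | ⟨-, rfl⟩ | ⟨h, -⟩
  exacts [.inl h, .inr rfl, absurd h hl]

theorem support_swapProcessing_right (hl : l₁ ≠ l₂) (hy : 0 ≤ y) (u : ℕ)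
    (h : 0 < swapProcessing x l₁ l₂ t t' y l₂ u) : 0 < x l₂ u ∨ u = t' := by
  rcases pos_of_swapProcessing_pos hy h with h | ⟨h, -⟩ | ⟨-, rfl⟩
  exacts [.inl h, absurd h.symm hl, .inr rfl]

theorem teOf_swapProcessing_le (hbdd : ∀ l, BddAbove {u | 0 < x l u}) (hl : l₁ ≠ l₂)
    (hy : 0 ≤ y) (ht : t ≤ teOf x l₁) (ht' : t' ≤ teOf x l₂) (l : ℕ) :
    teOf (swapProcessing x l₁ l₂ t t' y) l ≤ teOf x l := by
  by_cases hl₁ : l = l₁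
  · subst hl₁
    exact teOf_le_teOf_of_support_subset (hbdd l) ht (support_swapProcessing_left hl hy)
  by_cases hl₂ : l = l₂
  · subst hl₂
    exact teOf_le_teOf_of_support_subset (hbdd l) ht' (support_swapProcessing_right hl hy)
  exact (teOf_congr (funext fun _ ↦ swapProcessing_apply_of_ne_jobs hl₁ hl₂)).le

theorem tsOf_le_tsOf_swapProcessing (hx : 0 ≤ x l₁ t) (hx' : 0 ≤ x l₂ t') (hl : l₁ ≠ l₂)
    (htt' : t ≠ t') (hy : 0 < y) (ht : tsOf x l₁ ≤ t) (ht' : tsOf x l₂ ≤ t') (l : ℕ) :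
    tsOf x l ≤ tsOf (swapProcessing x l₁ l₂ t t' y) l := by
  by_cases hl₁ : l = l₁
  · subst hl₁
    refine tsOf_le_tsOf_of_support_subset ht ?_ (support_swapProcessing_left hl hy.le)
    rw [swapProcessing_apply_left_left]
    exact add_pos_of_nonneg_of_pos hx hy
  by_cases hl₂ : l = l₂
  · subst hl₂
    refine tsOf_le_tsOf_of_support_subset ht' ?_ (support_swapProcessing_right hl hy.le)
    rw [swapProcessing_apply_right_right hl₁ htt'.symm]
    exact add_pos_of_nonneg_of_pos hx' hy
  exact (tsOf_congr (funext fun _ ↦ swapProcessing_apply_of_ne_jobs hl₁ hl₂)).ge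

end swapWindows

theorem swap_preserves_feasibility_general
    (n L : ℕ)
    (x : ℕ → ℕ → ℝ) (M : ℕ → ℕ) (prec : ℕ → ℕ → Prop)
    (hnonneg : ∀ l u, 0 ≤ x l u)
    (hsupp : ∀ l u, 0 < x l u → l < n ∧ 1 ≤ u ∧ u ≤ L)
    (hprec : ∀ a b, prec a b → teOf x a < tsOf x b)
    (l₁ l₂ t t' : ℕ)
    (hne : l₁ ≠ l₂) (hmach : M l₁ = M l₂)
    (htt' : t < t')
    (hx₂ : 0 < x l₂ t) (hx₁ : 0 < x l₁ t')
    (hts₁ : tsOf x l₁ ≤ t)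
    (hord : teOf x l₁ ≤ teOf x l₂) :
    let y := min (x l₁ t') (x l₂ t)
    let x' : ℕ → ℕ → ℝ := fun l u =>
      if l = l₁ ∧ u = t then x l u + y
      else if l = l₁ ∧ u = t' then x l u - y
      else if l = l₂ ∧ u = t then x l u - y
      else if l = l₂ ∧ u = t' then x l u + y
      else x l u
    -- per-slot machine loads are unchanged
    (∀ i u, ∑ l ∈ (Finset.range n).filter (fun l => M l = i), x' l u
          = ∑ l ∈ (Finset.range n).filter (fun l => M l = i), x l u) ∧
    -- per-job total processing is unchanged
    (∀ l, ∑ u ∈ Finset.Icc 1 L, x' l u = ∑ u ∈ Finset.Icc 1 L, x l u) ∧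
    -- no ending time increases and no starting time decreases
    (∀ l, teOf x' l ≤ teOf x l ∧ tsOf x l ≤ tsOf x' l) ∧
    -- consequently, the new schedule still respects the precedences
    (∀ a b, prec a b → teOf x' a < tsOf x' b) := by
  intro y x'
  have hy : 0 < y := lt_min hx₁ hx₂
  have hbdd : ∀ l, BddAbove {u | 0 < x l u} := fun l ↦ ⟨L, fun u hu ↦ (hsupp l u hu).2.2⟩
  have hte₁ : t' ≤ teOf x l₁ := le_teOf (hbdd l₁) hx₁
  have hwindows : ∀ l, teOf x' l ≤ teOf x l ∧ tsOf x l ≤ tsOf x' l := fun l ↦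
    ⟨teOf_swapProcessing_le hbdd hne hy.le (htt'.le.trans hte₁) (hte₁.trans hord) l,
      tsOf_le_tsOf_swapProcessing (hnonneg _ _) (hnonneg _ _) hne htt'.ne hy hts₁
        ((tsOf_le hx₂).trans htt'.le) l⟩
  refine ⟨fun i ↦ sum_swapProcessing_jobs hne ?_, sum_swapProcessing_slots htt'.ne ?_,
    hwindows, fun a b hab ↦ ?_⟩
  · simp [Finset.mem_filter, hmach, (hsupp _ _ hx₁).1, (hsupp _ _ hx₂).1]
  · exact iff_of_true (Finset.mem_Icc.2 (hsupp _ _ hx₂).2) (Finset.mem_Icc.2 (hsupp _ _ hx₁).2)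
  · calc teOf x' a ≤ teOf x a := (hwindows a).1
      _ < tsOf x b := hprec a b hab
      _ ≤ tsOf x' b := (hwindows b).2

/-- The swap operation preserves feasibility. Given a fractional UMPS
schedule `x` respecting precedences, jobs `l₁ ≠ l₂` on the same machine, and slots
`t < t'` with `x_{l₂,t} > 0`, `x_{l₁,t'} > 0`, `tᵉ_{l₁} ≤ tᵉ_{l₂}` and
`tˢ_{l₁} ≤ t < tᵉ_{l₁}`, moving `y = min(x_{l₁,t'}, x_{l₂,t})` units of `l₁` from
`t'` to `t` and of `l₂` from `t` to `t'` keeps all per-slot machine loads and all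
per-job totals unchanged, increases no ending time, decreases no starting time, and
hence still respects the precedences. -/
theorem swap_preserves_feasibility
    (n L : ℕ)
    (x : ℕ → ℕ → ℝ) (M : ℕ → ℕ) (prec : ℕ → ℕ → Prop)
    (hnonneg : ∀ l u, 0 ≤ x l u)
    (hsupp : ∀ l u, 0 < x l u → l < n ∧ 1 ≤ u ∧ u ≤ L)
    (hcap : ∀ i u, ∑ l ∈ (Finset.range n).filter (fun l => M l = i), x l u ≤ 1)
    (hprec : ∀ a b, prec a b → teOf x a < tsOf x b)
    (l₁ l₂ t t' : ℕ)
    (hne : l₁ ≠ l₂) (hmach : M l₁ = M l₂)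
    (htt' : t < t')
    (hx₂ : 0 < x l₂ t) (hx₁ : 0 < x l₁ t')
    (hts₁ : tsOf x l₁ ≤ t) (hte₁ : t < teOf x l₁)
    (hord : teOf x l₁ ≤ teOf x l₂) :
    let y := min (x l₁ t') (x l₂ t)
    let x' : ℕ → ℕ → ℝ := fun l u =>
      if l = l₁ ∧ u = t then x l u + y
      else if l = l₁ ∧ u = t' then x l u - y
      else if l = l₂ ∧ u = t then x l u - y
      else if l = l₂ ∧ u = t' then x l u + y
      else x l u
    -- per-slot machine loads are unchanged
    (∀ i u, ∑ l ∈ (Finset.range n).filter (fun l => M l = i), x' l u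
          = ∑ l ∈ (Finset.range n).filter (fun l => M l = i), x l u) ∧
    -- per-job total processing is unchanged
    (∀ l, ∑ u ∈ Finset.Icc 1 L, x' l u = ∑ u ∈ Finset.Icc 1 L, x l u) ∧
    -- no ending time increases and no starting time decreases
    (∀ l, teOf x' l ≤ teOf x l ∧ tsOf x l ≤ tsOf x' l) ∧
    -- consequently, the new schedule still respects the precedences
    (∀ a b, prec a b → teOf x' a < tsOf x' b) :=
  swap_preserves_feasibility_general n L x M prec hnonneg hsupp hprec l₁ l₂ t t' hne hmach htt' hx₂
    hx₁ hts₁ hord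
end
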